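/- Let η be a Fox pairing on ℤ[π] and let I be the augmentation ideal of ℤ[π]. Then for all x, y, z ∈ π, one has η(x, [y,z]) − ε(η(x, y))·(z − 1) + ε(η(x, z))·(y − 1) ∈ I², where [y,z] = y·z·y⁻¹·z⁻¹ is the group commutator; in other words, η(x, [y,z]) ≡ ε(η(x,y))·(z − 1) − ε(η(x,z))·(y − 1) modulo I². -/

import Mathlib

/-! For fixed `x`, the map `D = η(x, -)` satisfies `D(uv) = D(u) v + D(v)` whenever `ε(u) = 1`, so
`D(g⁻¹) = -D(g) g⁻¹` and `D([y,z])` expands exactly in terms of `A = D(y)`, `B = D(z)` and the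
group elements involved. Modulo `I²` one may replace `A` and `B` by the integers `ε(A)` and `ε(B)`,
and a noncommutative ring identity then writes the difference as a sum of products of two
elements of `I`. -/

/-- The augmentation homomorphism of the group ring `ℤ[π]`. -/
noncomputable def aug (π : Type*) [Group π] : MonoidAlgebra ℤ π →ₐ[ℤ] ℤ :=
  MonoidAlgebra.lift ℤ ℤ π 1

/-- The augmentation ideal `I = ker ε`, as a `ℤ`-submodule of `ℤ[π]`. -/
noncomputable def augIdeal (π : Type*) [Group π] : Submodule ℤ (MonoidAlgebra ℤ π) :=
  LinearMap.ker (aug π).toLinearMap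

/-- A Fox pairing on the group ring `ℤ[π]`. -/
structure FoxPairing (π : Type*) [Group π] where
  toFun : MonoidAlgebra ℤ π →ₗ[ℤ] MonoidAlgebra ℤ π →ₗ[ℤ] MonoidAlgebra ℤ π
  fox_left : ∀ x x' y : MonoidAlgebra ℤ π,
    toFun (x * x') y = x * toFun x' y + aug π x' • toFun x y
  fox_right : ∀ x y y' : MonoidAlgebra ℤ π,
    toFun x (y * y') = toFun x y * y' + aug π y • toFun x y'

section AugmentationIdeal

variable {π : Type*} [Group π]

theorem mem_augIdeal_iff {u : MonoidAlgebra ℤ π} : u ∈ augIdeal π ↔ aug π u = 0 :=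
  LinearMap.mem_ker

@[simp]
theorem aug_single (g : π) (n : ℤ) : aug π (MonoidAlgebra.single g n) = n := by
  simp [aug]

theorem aug_of (g : π) : aug π (MonoidAlgebra.of ℤ π g) = 1 :=
  aug_single g 1

theorem mul_mem_augIdeal_sq {u v : MonoidAlgebra ℤ π} (hu : u ∈ augIdeal π)
    (hv : v ∈ augIdeal π) : u * v ∈ augIdeal π ^ 2 := by
  rw [sq]
  exact Submodule.mul_mem_mul hu hv

theorem zsmul_mul_mem_augIdeal_sq (n : ℤ) {u v : MonoidAlgebra ℤ π} (hu : u ∈ augIdeal π)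
    (hv : v ∈ augIdeal π) : n • (u * v) ∈ augIdeal π ^ 2 :=
  Submodule.smul_mem _ n (mul_mem_augIdeal_sq hu hv)

end AugmentationIdeal

namespace FoxPairing

variable {π : Type*} [Group π] (η : FoxPairing π) (w : MonoidAlgebra ℤ π)

theorem map_one_right : η.toFun w 1 = 0 := by
  have h := η.fox_right w 1 1
  simp only [mul_one, map_one, one_smul] at h
  exact left_eq_add.mp h

theorem map_mul_right_of_aug_eq_one {u : MonoidAlgebra ℤ π} (hu : aug π u = 1)
    (v : MonoidAlgebra ℤ π) : η.toFun w (u * v) = η.toFun w u * v + η.toFun w v := by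
  rw [η.fox_right, hu, one_smul]

theorem map_of_mul_right (g h : π) :
    η.toFun w (MonoidAlgebra.of ℤ π (g * h)) =
      η.toFun w (MonoidAlgebra.of ℤ π g) * MonoidAlgebra.of ℤ π h +
        η.toFun w (MonoidAlgebra.of ℤ π h) := by
  rw [map_mul, η.map_mul_right_of_aug_eq_one w (aug_of g)]

theorem map_of_inv_right (g : π) :
    η.toFun w (MonoidAlgebra.of ℤ π g⁻¹) =
      -(η.toFun w (MonoidAlgebra.of ℤ π g) * MonoidAlgebra.of ℤ π g⁻¹) := by
  have h := η.map_of_mul_right w g g⁻¹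
  rw [mul_inv_cancel, map_one, η.map_one_right] at h
  exact eq_neg_of_add_eq_zero_right h.symm

theorem map_of_commutator_right (y z : π) :
    η.toFun w (MonoidAlgebra.of ℤ π (y * z * y⁻¹ * z⁻¹)) =
      η.toFun w (MonoidAlgebra.of ℤ π y) * MonoidAlgebra.of ℤ π z *
            MonoidAlgebra.of ℤ π y⁻¹ * MonoidAlgebra.of ℤ π z⁻¹ +
          η.toFun w (MonoidAlgebra.of ℤ π z) *
            (MonoidAlgebra.of ℤ π y⁻¹ * MonoidAlgebra.of ℤ π z⁻¹) -
        η.toFun w (MonoidAlgebra.of ℤ π y) *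
          (MonoidAlgebra.of ℤ π y⁻¹ * MonoidAlgebra.of ℤ π z⁻¹) -
      η.toFun w (MonoidAlgebra.of ℤ π z) * MonoidAlgebra.of ℤ π z⁻¹ := by
  simp only [map_of_mul_right, map_of_inv_right]
  noncomm_ring

end FoxPairing

/-- Each term on the right is a product of two factors with vanishing augmentation once `R = ℤ[π]`,
`a, b, c, d` are `y, z, y⁻¹, z⁻¹`, and `α, β` are the augmentations of `A, B`. -/
theorem commutator_expansion_eq {R : Type*} [Ring R] (A B a b c d : R) (α β : ℤ)
    (hac : a * c = 1) :
    A * b * c * d + B * (c * d) - A * (c * d) - B * d - α • (b - 1) + β • (a - 1) =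
      (A - α • 1) * ((b - 1) * (c * d)) + α • ((b - 1) * (c * d - 1)) +
        (B - β • 1) * ((c - 1) * d) + β • ((c - 1) * (d - 1)) -
        β • ((a - 1) * (c - 1)) := by
  have hac' : (a - 1) * (c - 1) = 1 - a - c + 1 :=
    calc (a - 1) * (c - 1) = a * c - a - c + 1 := by noncomm_ring
      _ = 1 - a - c + 1 := by rw [hac]
  rw [hac']
  simp only [zsmul_eq_mul]
  noncomm_ring

/-- For a Fox pairing `η` and `x, y, z ∈ π`,
`η(x,[y,z]) ≡ ε(η(x,y))·(z-1) - ε(η(x,z))·(y-1)` modulo `I²`, where `[y,z] = yzy⁻¹z⁻¹`. -/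
theorem foxPairing_commutator_mod_sq (π : Type*) [Group π] (η : FoxPairing π) (x y z : π) :
    η.toFun (MonoidAlgebra.of ℤ π x) (MonoidAlgebra.of ℤ π (y * z * y⁻¹ * z⁻¹)) -
        aug π (η.toFun (MonoidAlgebra.of ℤ π x) (MonoidAlgebra.of ℤ π y)) •
          (MonoidAlgebra.of ℤ π z - 1) +
        aug π (η.toFun (MonoidAlgebra.of ℤ π x) (MonoidAlgebra.of ℤ π z)) •
          (MonoidAlgebra.of ℤ π y - 1) ∈ augIdeal π ^ 2 := by
  have hyy : MonoidAlgebra.of ℤ π y * MonoidAlgebra.of ℤ π y⁻¹ = 1 := by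
    rw [← map_mul, mul_inv_cancel, map_one]
  rw [η.map_of_commutator_right, commutator_expansion_eq _ _ _ _ _ _ _ _ hyy]
  refine sub_mem (add_mem (add_mem (add_mem ?_ ?_) ?_) ?_) ?_ <;>
    first
    | apply mul_mem_augIdeal_sq
    | apply zsmul_mul_mem_augIdeal_sq
  all_goals simp [mem_augIdeal_iff]
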